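/- arXiv:2109.08920 — 9 statements merged into one kernel-verified Lean document; each statement's English description precedes it below -/
import Mathlib

section
/- For a non-increasing probability distribution P on positive integers, ∑_{n=2}^∞ P(n) log₂ n ≤ H(P) + P(1) log₂ P(1). -/
/-- For a non-increasing probability distribution P on positive integers,
∑_{n=2}^∞ P(n) log₂ n ≤ H(P) + P(1) log₂ P(1). -/
theorem tsum_log_le_entropy_add
    (P : ℕ → ℝ)
    (hnonneg : ∀ n, 1 ≤ n → 0 ≤ P n)
    (hmono : ∀ m, 1 ≤ m → P (m + 1) ≤ P m)
    (hsum : HasSum (fun n : ℕ => P (n + 1)) 1)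
    (hent : Summable (fun n : ℕ => P (n + 1) * Real.logb 2 (P (n + 1))))
    (hlhs : Summable (fun n : ℕ => P (n + 2) * Real.logb 2 ((n : ℝ) + 2))) :
    ∑' n : ℕ, P (n + 2) * Real.logb 2 ((n : ℝ) + 2)
      ≤ (-∑' n : ℕ, P (n + 1) * Real.logb 2 (P (n + 1))) + P 1 * Real.logb 2 (P 1) := by
  -- P is antitone on [1, ∞)
  have hanti : ∀ m n : ℕ, 1 ≤ m → m ≤ n → P n ≤ P m := by
    intro m n hm hmn
    induction n, hmn using Nat.le_induction with
    | base => exact le_rfl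
    | succ n hn ih => exact le_trans (hmono n (le_trans hm hn)) ih
  -- partial sums are ≤ 1
  have hpart : ∀ N : ℕ, ∑ k ∈ Finset.range N, P (k + 1) ≤ 1 := by
    intro N
    exact sum_le_hasSum _ (fun i _ => hnonneg (i + 1) (Nat.le_add_left 1 i)) hsum
  -- key bound : P (n+2) ≤ 1/(n+2)
  have hkey : ∀ n : ℕ, P (n + 2) ≤ (((n : ℝ) + 2))⁻¹ := by
    intro n
    have hcard : ((n + 2) : ℝ) * P (n + 2) ≤ ∑ k ∈ Finset.range (n + 2), P (k + 1) := by
      have : ∑ k ∈ Finset.range (n + 2), P (n + 2) ≤ ∑ k ∈ Finset.range (n + 2), P (k + 1) := by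
        apply Finset.sum_le_sum
        intro i hi
        exact hanti (i + 1) (n + 2) (Nat.le_add_left 1 i)
          (Nat.succ_le_of_lt (by simpa using Finset.mem_range.mp hi))
      simpa [Finset.sum_const, nsmul_eq_mul] using this
    have h1 : ((n + 2) : ℝ) * P (n + 2) ≤ 1 := le_trans hcard (hpart (n + 2))
    have hpos : (0 : ℝ) < (n : ℝ) + 2 := by positivity
    rw [show ((n : ℝ) + 2)⁻¹ = 1 / ((n : ℝ) + 2) from (one_div _).symm, le_div_iff₀ hpos]
    linarith [h1, mul_comm (P (n + 2)) ((n : ℝ) + 2)]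
  -- pointwise bound
  have hpt : ∀ n : ℕ, P (n + 2) * Real.logb 2 ((n : ℝ) + 2)
      ≤ -(P (n + 2) * Real.logb 2 (P (n + 2))) := by
    intro n
    rcases eq_or_lt_of_le (hnonneg (n + 2) (by omega)) with h0 | h0
    · simp [← h0]
    · have hpos : (0 : ℝ) < (n : ℝ) + 2 := by positivity
      have hle : Real.logb 2 ((n : ℝ) + 2) ≤ Real.logb 2 (P (n + 2))⁻¹ := by
        apply Real.logb_le_logb_of_le one_lt_two hpos
        rw [le_inv_comm₀ hpos h0]
        exact hkey n
      have : Real.logb 2 (P (n + 2))⁻¹ = -Real.logb 2 (P (n + 2)) := Real.logb_inv _ _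
      rw [this] at hle
      calc P (n + 2) * Real.logb 2 ((n : ℝ) + 2)
          ≤ P (n + 2) * (-Real.logb 2 (P (n + 2))) :=
            mul_le_mul_of_nonneg_left hle (le_of_lt h0)
        _ = -(P (n + 2) * Real.logb 2 (P (n + 2))) := by ring
  -- summability of the shifted entropy series
  have hshift : Summable (fun n : ℕ => P (n + 2) * Real.logb 2 (P (n + 2))) := by
    have := (summable_nat_add_iff 1).mpr hent
    simpa [add_assoc] using this
  have hsum_le : ∑' n : ℕ, P (n + 2) * Real.logb 2 ((n : ℝ) + 2)
      ≤ ∑' n : ℕ, -(P (n + 2) * Real.logb 2 (P (n + 2))) :=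
    Summable.tsum_le_tsum hpt hlhs hshift.neg
  have hsplit : ∑' n : ℕ, P (n + 1) * Real.logb 2 (P (n + 1))
      = P 1 * Real.logb 2 (P 1) + ∑' n : ℕ, P (n + 2) * Real.logb 2 (P (n + 2)) := by
    have := Summable.tsum_eq_zero_add hent
    simpa [add_assoc] using this
  rw [hsplit, tsum_neg] at *
  linarith [hsum_le]
end

section
/- Let 1 ≤ b ≤ 9/4 and define g₁(x) = 2b + 1 - bx + bx·log₂ x. Then g₁(x) ≤ b + 1 for all x in the interval [1/2, 1]. -/
lemma key_aux : ∀ x ∈ Set.Icc (1 / 2 : ℝ) 1,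
    x * Real.log x - (x - 1) * Real.log 2 ≤ 0 := by
  have haff : ConvexOn ℝ (Set.Ici (0 : ℝ))
      (fun x : ℝ => -((x - 1) * Real.log 2)) := by
    refine ⟨convex_Ici 0, ?_⟩
    intro x _ y _ a b ha hb hab
    have hb' : b = 1 - a := by linarith
    subst hb'
    apply le_of_eq
    simp only [smul_eq_mul]
    ring
  have hconv : ConvexOn ℝ (Set.Ici (0 : ℝ))
      (fun x : ℝ => x * Real.log x - (x - 1) * Real.log 2) := by
    have := Real.convexOn_mul_log.add haff
    simpa [sub_eq_add_neg, Pi.add_def] using this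
  intro x hx
  have h12 : (1 / 2 : ℝ) ∈ Set.Ici (0 : ℝ) := by norm_num
  have h1 : (1 : ℝ) ∈ Set.Ici (0 : ℝ) := by norm_num
  have hseg : x ∈ segment ℝ (1 / 2 : ℝ) 1 := by
    rw [segment_eq_Icc (by norm_num : (1 / 2 : ℝ) ≤ 1)]
    exact hx
  have := hconv.le_on_segment h12 h1 hseg
  have e1 : (1 / 2 : ℝ) * Real.log (1 / 2) - (1 / 2 - 1) * Real.log 2 = 0 := by
    rw [one_div, Real.log_inv]; ring
  have e2 : (1 : ℝ) * Real.log 1 - (1 - 1) * Real.log 2 = 0 := by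
    simp
  simp only [e1, e2, max_self] at this
  simpa using this

/-- For 1 ≤ b ≤ 9/4 and g₁(x) = 2b + 1 - bx + bx·log₂ x, we have
g₁(x) ≤ b + 1 on [1/2, 1]. -/
theorem g1_le (b : ℝ) (hb1 : 1 ≤ b) (hb2 : b ≤ 9 / 4) :
    ∀ x ∈ Set.Icc (1 / 2 : ℝ) 1,
      2 * b + 1 - b * x + b * x * Real.logb 2 x ≤ b + 1 := by
  intro x hx
  have key := key_aux x hx
  have hlog2 : (0 : ℝ) < Real.log 2 := Real.log_pos (by norm_num)
  have hdiv : x * Real.logb 2 x ≤ x - 1 := by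
    rw [Real.logb, ← mul_div_assoc, div_le_iff₀ hlog2]
    linarith
  have hb0 : (0 : ℝ) ≤ b := by linarith
  nlinarith [mul_le_mul_of_nonneg_left hdiv hb0]
end

section
/- Let 1 ≤ b ≤ 9/4 and define g₂(x) = (b + 1 - bx + bx·log₂ x)/(-log₂ x). Then g₂ is strictly increasing on the interval (0, 1/2) and g₂(x) < 1 for all x ∈ (0, 1/2). -/
private lemma exp_quart' {t : ℝ} (ht : 0 ≤ t) :
    1 + t + t^2/2 + t^3/6 + t^4/24 ≤ Real.exp t := by
  have h := Real.sum_le_exp_of_nonneg ht 5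
  simp [Finset.sum_range_succ, Nat.factorial] at h
  linarith

private lemma key1' {b t l : ℝ} (hb1 : 1 ≤ b) (hb2 : b ≤ 9/4) (ht : 0 < t)
    (hl : 0.6931 ≤ l) (hl2 : l ≤ 0.6932) :
    b * (l + t * l + t^2) < (b+1) * l * (1 + t + t^2/2 + t^3/6) := by
  nlinarith [sq_nonneg (t - 8/5), mul_nonneg ht.le (sq_nonneg (t - 8/5)),
    mul_nonneg (mul_nonneg (sub_nonneg.2 hb2) (sq_nonneg t)) ht.le,
    mul_nonneg (sub_nonneg.2 hb2) (sq_nonneg t),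
    mul_nonneg (sub_nonneg.2 hb1) (sq_nonneg t),
    mul_nonneg (mul_nonneg (sub_nonneg.2 hb1) (sq_nonneg t)) ht.le,
    mul_nonneg (sub_nonneg.2 hb2) (sub_nonneg.2 hb1), sq_nonneg (t-3)]

private lemma key2' {b t l : ℝ} (hb1 : 1 ≤ b) (hb2 : b ≤ 9/4)
    (hl2 : l ≤ 0.6932) :
    b * (t + l - 1) < 1 + t + t^2/2 := by
  nlinarith [sq_nonneg (t - b + 1), mul_nonneg (sub_nonneg.2 hb2) (sub_nonneg.2 hb1)]

/-- For 1 ≤ b ≤ 9/4 and g₂(x) = (b + 1 - bx + bx·log₂ x)/(-log₂ x),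
g₂ is strictly increasing on (0, 1/2) and g₂(x) < 1 there. -/
theorem g2_strictMono_and_lt_one (b : ℝ) (hb1 : 1 ≤ b) (hb2 : b ≤ 9 / 4) :
    StrictMonoOn
      (fun x : ℝ => (b + 1 - b * x + b * x * Real.logb 2 x) / (-Real.logb 2 x))
      (Set.Ioo 0 (1 / 2)) ∧
    ∀ x ∈ Set.Ioo (0 : ℝ) (1 / 2),
      (b + 1 - b * x + b * x * Real.logb 2 x) / (-Real.logb 2 x) < 1 := by
  have hl0 : (0.6931:ℝ) ≤ Real.log 2 := by linarith [Real.log_two_gt_d9]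
  have hl2 : Real.log 2 ≤ 0.6932 := by linarith [Real.log_two_lt_d9]
  have hlpos : (0:ℝ) < Real.log 2 := by linarith
  simp only [← Real.log_div_log]
  set l := Real.log 2 with hldef
  -- basic facts on the interval
  have hgen : ∀ x ∈ Set.Ioo (0:ℝ) (1/2), Real.log x < -l ∧ Real.exp (-Real.log x) = x⁻¹ := by
    rintro x ⟨hx0, hxh⟩
    constructor
    · have : Real.log x < Real.log (1/2) := Real.log_lt_log hx0 hxh
      rwa [one_div, Real.log_inv] at this
    · rw [Real.exp_neg, Real.exp_log hx0]
  -- the derivative of g₂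
  have hderiv : ∀ x ∈ Set.Ioo (0:ℝ) (1/2),
      HasDerivAt (fun x : ℝ => (b + 1 - b * x + b * x * (Real.log x / l)) / (-(Real.log x / l)))
        ((((0:ℝ) - b * 1 + (b * 1 * (Real.log x / l) + b * x * (x⁻¹ / l))) * (-(Real.log x / l))
          - (b + 1 - b * x + b * x * (Real.log x / l)) * (-(x⁻¹ / l))) / (-(Real.log x / l))^2) x := by
    rintro x ⟨hx0, hxh⟩
    have hg : Real.log x < -l := (hgen x ⟨hx0, hxh⟩).1
    have hlog : HasDerivAt Real.log x⁻¹ x := Real.hasDerivAt_log hx0.ne'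
    have hL : HasDerivAt (fun y : ℝ => Real.log y / l) (x⁻¹ / l) x := hlog.div_const l
    have hN : HasDerivAt (fun y : ℝ => b + 1 - b * y + b * y * (Real.log y / l))
        ((0:ℝ) - b * 1 + (b * 1 * (Real.log x / l) + b * x * (x⁻¹ / l))) x := by
      exact ((hasDerivAt_const x (b+1)).sub ((hasDerivAt_id x).const_mul b)).add
        (((hasDerivAt_id x).const_mul b).mul hL)
    have hD : HasDerivAt (fun y : ℝ => -(Real.log y / l)) (-(x⁻¹ / l)) x := hL.neg
    have hD0 : -(Real.log x / l) ≠ 0 := by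
      have : 0 < -(Real.log x / l) := by
        rw [neg_pos]
        exact div_neg_of_neg_of_pos (by linarith) hlpos
      exact this.ne'
    exact hN.div hD hD0
  -- positivity of the derivative
  have hpos : ∀ x ∈ Set.Ioo (0:ℝ) (1/2),
      0 < (((0:ℝ) - b * 1 + (b * 1 * (Real.log x / l) + b * x * (x⁻¹ / l))) * (-(Real.log x / l))
          - (b + 1 - b * x + b * x * (Real.log x / l)) * (-(x⁻¹ / l))) / (-(Real.log x / l))^2 := by
    rintro x ⟨hx0, hxh⟩
    have hg : Real.log x < -l := (hgen x ⟨hx0, hxh⟩).1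
    have hexp : Real.exp (-Real.log x) = x⁻¹ := (hgen x ⟨hx0, hxh⟩).2
    obtain ⟨t, htdef, ht⟩ : ∃ t : ℝ, Real.log x = -t ∧ 0 < t :=
      ⟨-Real.log x, by ring, by linarith⟩
    rw [htdef] at hexp hg
    rw [neg_neg] at hexp
    have hxe : x * (1 + t + t^2/2 + t^3/6) < 1 := by
      have h1 : 1 + t + t^2/2 + t^3/6 + t^4/24 ≤ Real.exp t := exp_quart' ht.le
      have h2 : x * Real.exp t = 1 := by
        rw [hexp, mul_inv_cancel₀ hx0.ne']
      nlinarith [pow_pos ht 4, mul_lt_mul_of_pos_left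
        (show (1:ℝ) + t + t^2/2 + t^3/6 < Real.exp t by nlinarith [pow_pos ht 4]) hx0]
    have hk := key1' hb1 hb2 ht hl0 hl2
    have hnum : 0 < (b+1)*l - b*x*(l + t*l + t^2) := by
      have h3 := mul_lt_mul_of_pos_left hk hx0
      have h4 : ((b+1)*l) * (x * (1 + t + t^2/2 + t^3/6)) < ((b+1)*l) * 1 :=
        mul_lt_mul_of_pos_left hxe (by positivity)
      nlinarith
    have hglt : Real.log x = -t := htdef
    have heq : (((0:ℝ) - b * 1 + (b * 1 * (Real.log x / l) + b * x * (x⁻¹ / l))) * (-(Real.log x / l))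
          - (b + 1 - b * x + b * x * (Real.log x / l)) * (-(x⁻¹ / l)))
        = ((b+1)*l - b*x*(l + t*l + t^2)) / (x * l^2) := by
      rw [hglt]
      field_simp
      ring
    rw [heq]
    have hDpos : 0 < (-(Real.log x / l))^2 := by
      have : 0 < -(Real.log x / l) := by
        rw [neg_pos]; exact div_neg_of_neg_of_pos (by linarith) hlpos
      positivity
    exact div_pos (div_pos hnum (by positivity)) hDpos
  -- Part 1: strict monotonicity
  have part1 : StrictMonoOn
      (fun x : ℝ => (b + 1 - b * x + b * x * (Real.log x / l)) / (-(Real.log x / l)))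
      (Set.Ioo 0 (1/2)) := by
    apply strictMonoOn_of_deriv_pos (convex_Ioo _ _)
    · exact fun x hx => (hderiv x hx).continuousAt.continuousWithinAt
    · intro x hx
      rw [interior_Ioo] at hx
      rw [(hderiv x hx).deriv]
      exact hpos x hx
  refine ⟨part1, ?_⟩
  -- Part 2: the auxiliary function H
  have hderivH : ∀ x : ℝ, 0 < x →
      HasDerivAt (fun y : ℝ => b + 1 - b * y + (b * y + 1) * (Real.log y / l))
        ((0:ℝ) - b * 1 + ((b * 1 + 0) * (Real.log x / l) + (b * x + 1) * (x⁻¹ / l))) x := by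
    intro x hx0
    have hlog : HasDerivAt Real.log x⁻¹ x := Real.hasDerivAt_log hx0.ne'
    have hL : HasDerivAt (fun y : ℝ => Real.log y / l) (x⁻¹ / l) x := hlog.div_const l
    exact ((hasDerivAt_const x (b+1)).sub ((hasDerivAt_id x).const_mul b)).add
      ((((hasDerivAt_id x).const_mul b).add (hasDerivAt_const x 1)).mul hL)
  have hH : StrictMonoOn (fun y : ℝ => b + 1 - b * y + (b * y + 1) * (Real.log y / l))
      (Set.Ioc 0 (1/2)) := by
    apply strictMonoOn_of_deriv_pos (convex_Ioc _ _)
    · exact fun x hx => (hderivH x hx.1).continuousAt.continuousWithinAt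
    · intro x hx
      rw [interior_Ioc] at hx
      obtain ⟨hx0, hxh⟩ := hx
      rw [(hderivH x hx0).deriv]
      have hg : Real.log x < -l := (hgen x ⟨hx0, hxh⟩).1
      have hexp : Real.exp (-Real.log x) = x⁻¹ := (hgen x ⟨hx0, hxh⟩).2
      obtain ⟨t, htdef, ht⟩ : ∃ t : ℝ, Real.log x = -t ∧ 0 < t :=
        ⟨-Real.log x, by ring, by linarith⟩
      rw [htdef] at hexp hg
      rw [neg_neg] at hexp
      have hxe : x * (1 + t + t^2/2) < 1 := by
        have h1 : 1 + t + t^2/2 + t^3/6 + t^4/24 ≤ Real.exp t := exp_quart' ht.le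
        have h2 : x * Real.exp t = 1 := by rw [hexp, mul_inv_cancel₀ hx0.ne']
        nlinarith [pow_pos ht 3, pow_pos ht 4, mul_lt_mul_of_pos_left
          (show (1:ℝ) + t + t^2/2 < Real.exp t by nlinarith [pow_pos ht 3, pow_pos ht 4]) hx0]
      have hk := key2' (t := t) hb1 hb2 hl2
      have hnum : 0 < 1 + b*x*(1 - l - t) := by
        have h3 := mul_lt_mul_of_pos_left hk hx0
        nlinarith
      have hglt : Real.log x = -t := htdef
      have heq : ((0:ℝ) - b * 1 + ((b * 1 + 0) * (Real.log x / l) + (b * x + 1) * (x⁻¹ / l)))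
          = (1 + b*x*(1 - l - t)) / (x * l) := by
        rw [hglt]; field_simp; ring
      rw [heq]
      exact div_pos hnum (by positivity)
  have hH12 : (fun y : ℝ => b + 1 - b * y + (b * y + 1) * (Real.log y / l)) (1/2) = 0 := by
    simp only [one_div, Real.log_inv]
    field_simp
    ring
  rintro x ⟨hx0, hxh⟩
  have hHx : b + 1 - b * x + (b * x + 1) * (Real.log x / l) < 0 := by
    have := hH (Set.mem_Ioc.2 ⟨hx0, hxh.le⟩) (Set.mem_Ioc.2 ⟨by norm_num, le_refl _⟩) hxh
    rw [hH12] at this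
    exact this
  have hg : Real.log x < -l := (hgen x ⟨hx0, hxh⟩).1
  have hDpos : 0 < -(Real.log x / l) := by
    rw [neg_pos]; exact div_neg_of_neg_of_pos (by linarith) hlpos
  rw [div_lt_one hDpos]
  nlinarith [hHx]
end

section
/- Let L : ℕ⁺ → ℕ be a codeword length function of a binary prefix code satisfying L(1) = 1 and L(m) ≤ b + 1 + b·⌊log₂ m⌋ for all m ≥ 2, where 1 ≤ b ≤ 9/4. Then for every non-increasing probability distribution P on ℕ⁺ with finite entropy, the expected codeword length satisfies E_P(L) ≤ (b+1)·max{1, H(P)}. -/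
open Real

section helpers

lemma chord_exp' {a c x : ℝ} (h1 : a ≤ x) (h2 : x ≤ c) (hac : a < c) :
    (2:ℝ) ^ x ≤ ((c - x) * (2:ℝ) ^ a + (x - a) * (2:ℝ) ^ c) / (c - a) := by
  have hca : (0:ℝ) < c - a := by linarith
  have ht1 : (0:ℝ) ≤ (c - x) / (c - a) := div_nonneg (by linarith) hca.le
  have ht2 : (0:ℝ) ≤ (x - a) / (c - a) := div_nonneg (by linarith) hca.le
  have hts : (c - x) / (c - a) + (x - a) / (c - a) = 1 := by field_simp; ring
  have key := convexOn_exp.2 (Set.mem_univ (Real.log 2 * a)) (Set.mem_univ (Real.log 2 * c))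
      ht1 ht2 hts
  have hx : ((c - x) / (c - a)) • (Real.log 2 * a) + ((x - a) / (c - a)) • (Real.log 2 * c)
      = Real.log 2 * x := by
    rw [smul_eq_mul, smul_eq_mul]
    field_simp
    ring
  rw [hx] at key
  have e : ∀ y : ℝ, (2:ℝ) ^ y = Real.exp (Real.log 2 * y) := fun y =>
    Real.rpow_def_of_pos (by norm_num) y
  rw [e, e, e]
  calc Real.exp (Real.log 2 * x)
      ≤ ((c - x) / (c - a)) • Real.exp (Real.log 2 * a)
        + ((x - a) / (c - a)) • Real.exp (Real.log 2 * c) := key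
    _ = ((c - x) * Real.exp (Real.log 2 * a) + (x - a) * Real.exp (Real.log 2 * c)) / (c - a) := by
        rw [smul_eq_mul, smul_eq_mul]; ring

lemma rpow_32_le' : (2:ℝ) ^ ((3:ℝ)/2) ≤ 2.8285 := by
  have hy : (0:ℝ) < (2:ℝ) ^ ((3:ℝ)/2) := Real.rpow_pos_of_pos (by norm_num) _
  have hsq : ((2:ℝ) ^ ((3:ℝ)/2)) ^ (2:ℕ) = 8 := by
    rw [← Real.rpow_natCast ((2:ℝ) ^ ((3:ℝ)/2)) 2, ← Real.rpow_mul (by norm_num)]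
    norm_num
  nlinarith [hsq, hy]

lemma rpow_134_le' : (2:ℝ) ^ ((13:ℝ)/4) ≤ 9.514 := by
  have hy : (0:ℝ) < (2:ℝ) ^ ((13:ℝ)/4) := Real.rpow_pos_of_pos (by norm_num) _
  have hsq : ((2:ℝ) ^ ((13:ℝ)/4)) ^ (4:ℕ) = 8192 := by
    rw [← Real.rpow_natCast ((2:ℝ) ^ ((13:ℝ)/4)) 4, ← Real.rpow_mul (by norm_num)]
    norm_num
  nlinarith [hsq, hy, sq_nonneg ((2:ℝ) ^ ((13:ℝ)/4) - 9.514),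
    sq_nonneg ((2:ℝ) ^ ((13:ℝ)/4) + 9.514), sq_nonneg (((2:ℝ) ^ ((13:ℝ)/4))^2 - 90.5)]

lemma one_add_le_rpow' {x : ℝ} (hx : 1 ≤ x) : 1 + x ≤ (2:ℝ) ^ x := by
  have h1 : (2:ℝ) ^ x = 2 * (2:ℝ) ^ (x - 1) := by
    conv_lhs => rw [show x = 1 + (x - 1) by ring]
    rw [Real.rpow_add (by norm_num : (0:ℝ) < 2), Real.rpow_one]
  have h2 : (2:ℝ) ^ (x - 1) = Real.exp (Real.log 2 * (x - 1)) :=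
    Real.rpow_def_of_pos (by norm_num) _
  have h3 := Real.add_one_le_exp (Real.log 2 * (x - 1))
  have hl : (0.6931:ℝ) ≤ Real.log 2 := by
    have := Real.log_two_gt_d9; linarith
  nlinarith [h3, hl, h1, h2]

lemma core_ineq' {x : ℝ} (hx : 1 ≤ x) :
    (13/4 - x) * (2:ℝ) ^ x ≤ (9/4) * (1 + x) := by
  have h2one : (2:ℝ) ^ (1:ℝ) = 2 := Real.rpow_one 2
  have h2two : (2:ℝ) ^ (2:ℝ) = 4 := by
    rw [show (2:ℝ) = ((2:ℕ):ℝ) by norm_num, Real.rpow_natCast]; norm_num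
  rcases le_or_gt x (3/2) with h1 | h1
  · have hc := chord_exp' hx h1 (by norm_num : (1:ℝ) < 3/2)
    rw [h2one] at hc
    have hb : (2:ℝ) ^ x ≤ ((3/2 - x) * 2 + (x - 1) * 2.8285) / (3/2 - 1) := by
      refine hc.trans ?_
      gcongr
      · exact rpow_32_le'
    have hb2 : (2:ℝ) ^ x ≤ 0.343 + 1.657 * x := by norm_num at hb; linarith
    have hm := mul_le_mul_of_nonneg_left hb2 (show (0:ℝ) ≤ 13/4 - x by linarith)
    nlinarith [sq_nonneg (x - 1)]
  rcases le_or_gt x 2 with h2 | h2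
  · have hc := chord_exp' h1.le h2 (by norm_num : (3:ℝ)/2 < 2)
    rw [h2two] at hc
    have hb : (2:ℝ) ^ x ≤ ((2 - x) * 2.8285 + (x - 3/2) * 4) / (2 - 3/2) := by
      refine hc.trans ?_
      gcongr
      · exact rpow_32_le'
    have hb2 : (2:ℝ) ^ x ≤ -0.686 + 2.343 * x := by norm_num at hb; linarith
    have hm := mul_le_mul_of_nonneg_left hb2 (show (0:ℝ) ≤ 13/4 - x by linarith)
    nlinarith [sq_nonneg (x - 3/2)]
  rcases le_or_gt x (13/4) with h3 | h3
  · have hc := chord_exp' h2.le h3 (by norm_num : (2:ℝ) < 13/4)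
    rw [h2two] at hc
    have hb : (2:ℝ) ^ x ≤ ((13/4 - x) * 4 + (x - 2) * 9.514) / (13/4 - 2) := by
      refine hc.trans ?_
      gcongr
      · exact rpow_134_le'
    have hb2 : (2:ℝ) ^ x ≤ -4.8224 + 4.4112 * x := by norm_num at hb; linarith
    have hm := mul_le_mul_of_nonneg_left hb2 (show (0:ℝ) ≤ 13/4 - x by linarith)
    nlinarith [sq_nonneg (x - 2)]
  · have hneg : (13/4 - x) * (2:ℝ) ^ x ≤ 0 :=
      mul_nonpos_of_nonpos_of_nonneg (by linarith)
        (Real.rpow_pos_of_pos (by norm_num) x).le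
    nlinarith

lemma combo_ineq {b x : ℝ} (hb1 : 1 ≤ b) (hb2 : b ≤ 9/4) (hx : 1 ≤ x) :
    (b + 1 - x) * (2:ℝ) ^ x ≤ b * (1 + x) := by
  have h1 := core_ineq' hx
  have h2 := one_add_le_rpow' hx
  nlinarith [h1, h2]

lemma half_lemma {p : ℝ} (h1 : 1/2 ≤ p) (h2 : p ≤ 1) : 1 ≤ p * (1 - Real.logb 2 p) := by
  have hp : 0 < p := by linarith
  have hl2 : (0:ℝ) < Real.log 2 := Real.log_pos one_lt_two
  -- chord bound for log on [1,2] at t = 1/p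
  set t : ℝ := p⁻¹ with ht
  have ht1 : 1 ≤ t := one_le_inv_iff₀.2 ⟨hp, h2⟩
  have ht2 : t ≤ 2 := by
    rw [ht]
    rw [inv_le_comm₀ hp (by norm_num)]
    linarith
  have key : (t - 1) * Real.log 2 ≤ Real.log t := by
    have hconc := (strictConcaveOn_log_Ioi.concaveOn).2
      (Set.mem_Ioi.2 one_pos) (Set.mem_Ioi.2 two_pos)
      (show (0:ℝ) ≤ 2 - t by linarith) (show (0:ℝ) ≤ t - 1 by linarith)
      (show (2 - t) + (t - 1) = 1 by ring)
    have heq : (2 - t) • (1:ℝ) + (t - 1) • (2:ℝ) = t := by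
      rw [smul_eq_mul, smul_eq_mul]; ring
    rw [heq] at hconc
    simpa [Real.log_one] using hconc
  have hlogt : Real.log t = -Real.log p := by rw [ht, Real.log_inv]
  rw [hlogt] at key
  -- conclude
  have hkey2 : (1 - p) * Real.log 2 ≤ -(p * Real.log p) := by
    have := mul_le_mul_of_nonneg_left key hp.le
    have htp : p * (t - 1) = 1 - p := by
      rw [ht]; field_simp
    nlinarith [this]
  rw [Real.logb]
  rw [show p * (1 - Real.log p / Real.log 2) = (p * Real.log 2 - p * Real.log p) / Real.log 2
    by field_simp, le_div_iff₀ hl2]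
  linarith

end helpers

/-- Theorem: if a binary prefix code (Kraft inequality) has L(1) = 1 and
L(m) ≤ b + 1 + b⌊log₂ m⌋ for m ≥ 2, with 1 ≤ b ≤ 9/4, then for every
non-increasing probability distribution P with finite entropy,
E_P(L) ≤ (b+1) · max{1, H(P)}. -/
theorem expected_length_le
    (b : ℝ) (hb1 : 1 ≤ b) (hb2 : b ≤ 9 / 4)
    (L : ℕ → ℕ)
    (hkraft : ∑' m : ℕ, ((2 : ENNReal) ^ L (m + 1))⁻¹ ≤ 1)
    (hL1 : L 1 = 1)
    (hLb : ∀ m : ℕ, 2 ≤ m → (L m : ℝ) ≤ b + 1 + b * (Nat.log 2 m : ℝ))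
    (P : ℕ → ℝ)
    (hnonneg : ∀ n, 1 ≤ n → 0 ≤ P n)
    (hmono : ∀ m, 1 ≤ m → P (m + 1) ≤ P m)
    (hsum : HasSum (fun n : ℕ => P (n + 1)) 1)
    (hent : Summable (fun n : ℕ => P (n + 1) * Real.logb 2 (P (n + 1))))
    (hexp : Summable (fun n : ℕ => (L (n + 1) : ℝ) * P (n + 1))) :
    ∑' n : ℕ, (L (n + 1) : ℝ) * P (n + 1)
      ≤ (b + 1) * max 1 (-∑' n : ℕ, P (n + 1) * Real.logb 2 (P (n + 1))) := by
  -- antitonicity of P on [1, ∞)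
  have hPanti : ∀ m n : ℕ, 1 ≤ m → m ≤ n → P n ≤ P m := by
    intro m n hm hmn
    induction n with
    | zero => omega
    | succ k ih =>
      rcases Nat.lt_or_ge m (k+1) with h | h
      · have hk : 1 ≤ k := by omega
        exact (hmono k hk).trans (ih (by omega))
      · have : m = k + 1 := by omega
        rw [this]
  set p : ℝ := P 1 with hp_def
  -- p > 0
  have hp_pos : 0 < p := by
    rcases lt_or_ge 0 p with h | h
    · exact h
    · exfalso
      have hp0 : p = 0 := le_antisymm h (hnonneg 1 le_rfl)
      have hz : ∀ n : ℕ, P (n + 1) = 0 := by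
        intro n
        refine le_antisymm ?_ (hnonneg (n+1) (by omega))
        calc P (n+1) ≤ P 1 := hPanti 1 (n+1) le_rfl (by omega)
          _ = 0 := hp0
      have : HasSum (fun _ : ℕ => (0:ℝ)) 1 := by
        convert hsum using 1
        exact (funext fun n => (hz n).symm)
      exact one_ne_zero (this.unique hasSum_zero)
  -- p ≤ 1
  have hp_le : p ≤ 1 := by
    have := le_hasSum hsum 0 (fun j _ => hnonneg (j+1) (by omega))
    simpa using this
  -- P m * m ≤ 1 for m ≥ 1
  have hPm : ∀ m : ℕ, 1 ≤ m → P m * (m:ℝ) ≤ 1 := by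
    intro m hm
    have hle : (m:ℝ) * P m ≤ ∑ k ∈ Finset.range m, P (k + 1) := by
      have hconst : ∑ _k ∈ Finset.range m, P m = (m:ℝ) * P m := by
        rw [Finset.sum_const, Finset.card_range, nsmul_eq_mul]
      rw [← hconst]
      apply Finset.sum_le_sum
      intro k hk
      exact hPanti (k+1) m (by omega) (by simpa using Finset.mem_range.1 hk)
    have hle2 : ∑ k ∈ Finset.range m, P (k + 1) ≤ 1 :=
      sum_le_hasSum _ (fun j _ => hnonneg (j+1) (by omega)) hsum
    calc P m * (m:ℝ) = (m:ℝ) * P m := by ring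
      _ ≤ 1 := hle.trans hle2
  -- summabilities
  have hsumP : Summable (fun n : ℕ => P (n + 1)) := hsum.summable
  have hsumP' : Summable (fun n : ℕ => P (n + 2)) := by
    have := (summable_nat_add_iff (f := fun n : ℕ => P (n + 1)) 1).2 hsumP
    simpa [add_assoc] using this
  have hent' : Summable (fun n : ℕ => P (n + 2) * Real.logb 2 (P (n + 2))) := by
    have := (summable_nat_add_iff (f := fun n : ℕ => P (n + 1) * Real.logb 2 (P (n + 1))) 1).2 hent
    simpa [add_assoc] using this
  have hexp' : Summable (fun n : ℕ => (L (n + 2) : ℝ) * P (n + 2)) := by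
    have := (summable_nat_add_iff (f := fun n : ℕ => (L (n + 1) : ℝ) * P (n + 1)) 1).2 hexp
    simpa [add_assoc] using this
  -- abbreviations
  set T : ℝ := ∑' n : ℕ, P (n + 1) * Real.logb 2 (P (n + 1)) with hT_def
  -- shifted tsum identities
  have hE_eq : ∑' n : ℕ, (L (n + 1) : ℝ) * P (n + 1)
      = p + ∑' n : ℕ, (L (n + 2) : ℝ) * P (n + 2) := by
    rw [Summable.tsum_eq_zero_add hexp]
    simp [hL1, add_assoc, hp_def]
  have hS_eq : ∑' n : ℕ, P (n + 2) = 1 - p := by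
    have h0 := Summable.tsum_eq_zero_add hsumP
    rw [hsum.tsum_eq] at h0
    simp only [add_assoc] at h0
    norm_num at h0 ⊢
    linarith
  have hT_eq : ∑' n : ℕ, P (n + 2) * Real.logb 2 (P (n + 2))
      = T - p * Real.logb 2 p := by
    have h0 := Summable.tsum_eq_zero_add hent
    rw [← hT_def] at h0
    simp only [add_assoc] at h0
    norm_num at h0 ⊢
    linarith
  -- termwise bound for the tail
  have hterm : ∀ n : ℕ, (L (n + 2) : ℝ) * P (n + 2)
      ≤ (b + 1) * P (n + 2) - b * (P (n + 2) * Real.logb 2 (P (n + 2))) := by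
    intro n
    set q : ℝ := P (n + 2) with hq_def
    have hq0 : 0 ≤ q := hnonneg (n+2) (by omega)
    rcases eq_or_lt_of_le hq0 with h | h
    · rw [← h]; simp
    · have hm1 : q * ((n:ℝ) + 2) ≤ 1 := by
        have := hPm (n+2) (by omega)
        simpa [hq_def] using this
      have hinv : ((n:ℝ) + 2) ≤ q⁻¹ := by
        rw [le_inv_comm₀ (by positivity) h]
        calc q ≤ q * ((n:ℝ)+2) / ((n:ℝ)+2) := by
              rw [mul_div_assoc, div_self (by positivity), mul_one]
          _ ≤ 1 / ((n:ℝ)+2) := by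
              apply div_le_div_of_nonneg_right hm1 (by positivity) |>.trans_eq rfl
          _ = ((n:ℝ)+2)⁻¹ := one_div _
      have hlogchain : (L (n+2) : ℝ) ≤ b + 1 - b * Real.logb 2 q := by
        have h1 := hLb (n+2) (by omega)
        have h2 : (Nat.log 2 (n+2) : ℝ) ≤ Real.logb 2 ((n:ℝ)+2) := by
          have := Real.natLog_le_logb (n+2) 2
          simpa [Nat.cast_add] using this
        have h3 : Real.logb 2 ((n:ℝ)+2) ≤ Real.logb 2 q⁻¹ :=
          Real.logb_le_logb_of_le one_lt_two (by positivity) hinv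
        have h4 : Real.logb 2 q⁻¹ = -Real.logb 2 q := Real.logb_inv 2 q
        have hbpos : (0:ℝ) ≤ b := by linarith
        have : b * (Nat.log 2 (n+2) : ℝ) ≤ b * (-Real.logb 2 q) := by
          apply mul_le_mul_of_nonneg_left _ hbpos
          rw [← h4]; exact h2.trans h3
        linarith
      calc (L (n + 2) : ℝ) * q ≤ (b + 1 - b * Real.logb 2 q) * q :=
            mul_le_mul_of_nonneg_right hlogchain hq0
        _ = (b + 1) * q - b * (q * Real.logb 2 q) := by ring
  -- sum the bound
  have hRHS_sum : Summable (fun n : ℕ =>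
      (b + 1) * P (n + 2) - b * (P (n + 2) * Real.logb 2 (P (n + 2)))) :=
    (hsumP'.mul_left (b+1)).sub (hent'.mul_left b)
  have htail : ∑' n : ℕ, (L (n + 2) : ℝ) * P (n + 2)
      ≤ (b + 1) * (1 - p) - b * (T - p * Real.logb 2 p) := by
    calc ∑' n : ℕ, (L (n + 2) : ℝ) * P (n + 2)
        ≤ ∑' n : ℕ, ((b + 1) * P (n + 2) - b * (P (n + 2) * Real.logb 2 (P (n + 2)))) :=
          Summable.tsum_le_tsum hterm hexp' hRHS_sum
      _ = (b + 1) * (1 - p) - b * (T - p * Real.logb 2 p) := by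
          rw [Summable.tsum_sub (hsumP'.mul_left (b+1)) (hent'.mul_left b),
            tsum_mul_left, tsum_mul_left, hS_eq, hT_eq]
  have hE_bound : ∑' n : ℕ, (L (n + 1) : ℝ) * P (n + 1)
      ≤ p + (b + 1) * (1 - p) + b * (-T) + b * (p * Real.logb 2 p) := by
    rw [hE_eq]; linarith
  -- entropy lower bound : -T ≥ -logb 2 p
  have hHlow : -Real.logb 2 p ≤ -T := by
    have hterm2 : ∀ n : ℕ, P (n + 1) * (-Real.logb 2 p)
        ≤ -(P (n + 1) * Real.logb 2 (P (n + 1))) := by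
      intro n
      have hq0 : 0 ≤ P (n+1) := hnonneg (n+1) (by omega)
      rcases eq_or_lt_of_le hq0 with h | h
      · rw [← h]; simp
      · have hle : P (n+1) ≤ p := hPanti 1 (n+1) le_rfl (by omega)
        have : Real.logb 2 (P (n+1)) ≤ Real.logb 2 p :=
          Real.logb_le_logb_of_le one_lt_two h hle
        nlinarith
    have hs1 : Summable (fun n : ℕ => P (n + 1) * (-Real.logb 2 p)) :=
      hsumP.mul_right _
    have := Summable.tsum_le_tsum hterm2 hs1 hent.neg
    rw [tsum_neg] at this
    rw [tsum_mul_right, hsum.tsum_eq, one_mul] at this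
    exact this
  have hlogp_nonpos : Real.logb 2 p ≤ 0 := Real.logb_nonpos one_lt_two hp_pos.le hp_le
  set M : ℝ := max 1 (-T) with hM_def
  have hM1 : 1 ≤ M := le_max_left _ _
  have hMH : -T ≤ M := le_max_right _ _
  rcases le_or_gt (1/2 : ℝ) p with hhalf | hhalf
  · -- case p ≥ 1/2
    have hh := half_lemma hhalf hp_le
    have hplogp : p * Real.logb 2 p ≤ p - 1 := by nlinarith
    have hTnn : 0 ≤ -T := le_trans (by linarith) hHlow
    have hbM : b * (-T) ≤ b * M := mul_le_mul_of_nonneg_left hMH (by linarith)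
    calc ∑' n : ℕ, (L (n + 1) : ℝ) * P (n + 1)
        ≤ p + (b + 1) * (1 - p) + b * (-T) + b * (p * Real.logb 2 p) := hE_bound
      _ ≤ 1 + b * (-T) := by nlinarith
      _ ≤ M + b * M := by linarith
      _ = (b + 1) * M := by ring
  · -- case p < 1/2
    set x : ℝ := -Real.logb 2 p with hx_def
    have hx1 : 1 ≤ x := by
      have : Real.logb 2 p ≤ Real.logb 2 (1/2) :=
        Real.logb_le_logb_of_le one_lt_two hp_pos (by linarith)
      have h12 : Real.logb 2 ((1:ℝ)/2) = -1 := by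
        rw [one_div, Real.logb_inv, Real.logb_self_eq_one (by norm_num : (1:ℝ) < 2)]
      rw [h12] at this
      simp only [hx_def]
      linarith
    have hpx : p * (2:ℝ) ^ x = 1 := by
      have h2 : (2:ℝ) ^ x = p⁻¹ := by
        rw [hx_def, Real.rpow_neg (by norm_num : (0:ℝ) ≤ 2),
          Real.rpow_logb (by norm_num) (by norm_num) hp_pos]
      rw [h2, mul_inv_cancel₀ hp_pos.ne']
    have hcombo := combo_ineq hb1 hb2 hx1
    have hkey : b + 1 - x ≤ b * p * (1 + x) := by
      have hmul := mul_le_mul_of_nonneg_left hcombo hp_pos.le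
      have h2pos : (0:ℝ) < (2:ℝ) ^ x := Real.rpow_pos_of_pos (by norm_num) x
      nlinarith [hmul, hpx]
    have hHx : x ≤ -T := hHlow
    have hMeq : M = -T := max_eq_right (by linarith)
    rw [hMeq]
    have hlogp : Real.logb 2 p = -x := by rw [hx_def]; ring
    calc ∑' n : ℕ, (L (n + 1) : ℝ) * P (n + 1)
        ≤ p + (b + 1) * (1 - p) + b * (-T) + b * (p * Real.logb 2 p) := hE_bound
      _ ≤ (b + 1) * (-T) := by rw [hlogp]; nlinarith
end

section
/- There is no function L : ℕ⁺ → ℕ satisfying Kraft's inequality ∑_{m=1}^∞ 2^{-L(m)} ≤ 1 together with L(1) = 1 and L(m) ≤ b + 1 + b·⌊log₂ m⌋ for all m ≥ 2, where b < 3/2. -/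
/-- There is no length function L : ℕ⁺ → ℕ satisfying Kraft's inequality
together with L(1) = 1 and L(m) ≤ b + 1 + b⌊log₂ m⌋ for all m ≥ 2, when b < 3/2. -/
theorem no_prefix_code_of_b_lt
    (b : ℝ) (hb : b < 3 / 2) :
    ¬ ∃ L : ℕ → ℕ,
        (∑' m : ℕ, ((2 : ENNReal) ^ L (m + 1))⁻¹ ≤ 1) ∧
        L 1 = 1 ∧
        ∀ m : ℕ, 2 ≤ m → (L m : ℝ) ≤ b + 1 + b * (Nat.log 2 m : ℝ) := by
  rintro ⟨L, hsum, h1, hB⟩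
  -- key bound: for m ≥ 2, 2 * L m ≤ 3 * Nat.log 2 m + 4
  have hK : ∀ m, 2 ≤ m → 2 * L m ≤ 3 * Nat.log 2 m + 4 := by
    intro m hm
    have h := hB m hm
    have hk0 : (0:ℝ) ≤ (Nat.log 2 m : ℝ) := Nat.cast_nonneg _
    have h2 : (L m : ℝ) < 3/2 * (1 + (Nat.log 2 m : ℝ)) + 1 := by
      have he : b + 1 + b * (Nat.log 2 m : ℝ) = b * (1 + (Nat.log 2 m : ℝ)) + 1 := by ring
      rw [he] at h
      have : b * (1 + (Nat.log 2 m : ℝ)) < 3/2 * (1 + (Nat.log 2 m : ℝ)) := by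
        apply mul_lt_mul_of_pos_right hb; linarith
      linarith
    have h3 : ((2 * L m : ℕ) : ℝ) < ((3 * Nat.log 2 m + 5 : ℕ) : ℝ) := by
      push_cast; linarith
    exact Nat.lt_succ_iff.mp (by exact_mod_cast h3)
  set E : ℕ → ℕ := fun n => if n = 0 then 1 else (3 * Nat.log 2 (n+1) + 4) / 2 with hE
  have hle : ∀ n, ((2 : ENNReal) ^ E n)⁻¹ ≤ ((2 : ENNReal) ^ L (n + 1))⁻¹ := by
    intro n
    apply ENNReal.inv_le_inv.2
    apply pow_le_pow_right₀ one_le_two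
    rcases Nat.eq_zero_or_pos n with h | h
    · subst h; simp [hE, h1]
    · have := hK (n+1) (by omega)
      simp only [hE]
      rw [if_neg (by omega)]
      omega
  have hpart : ∑ n ∈ Finset.range 31, ((2 : ENNReal) ^ L (n + 1))⁻¹ ≤ 1 :=
    le_trans (ENNReal.sum_le_tsum _) hsum
  have hfin : ∑ n ∈ Finset.range 31, ((2 : ENNReal) ^ E n)⁻¹ ≤ 1 :=
    le_trans (Finset.sum_le_sum fun n _ => hle n) hpart
  have hreal : ∑ n ∈ Finset.range 31, (((2:ℝ)) ^ E n)⁻¹ ≤ 1 := by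
    have h := ENNReal.toReal_mono (by norm_num) hfin
    rw [ENNReal.toReal_sum (fun a _ => by simp)] at h
    simpa using h
  simp only [hE, Finset.sum_range_succ, Finset.sum_range_zero] at hreal
  norm_num [Nat.log] at hreal
end

section
/- Define L_ι(1) = 1 and L_ι(m) = 2 + ⌊(1 + ⌊log₂ m⌋)/2⌋ + ⌊log₂ m⌋ for m ≥ 2. Then L_ι satisfies Kraft's inequality: ∑_{m=1}^∞ 2^{-L_ι(m)} ≤ 1. -/
/-- The codeword length function of the ι code. -/
def iotaLen (m : ℕ) : ℕ :=
  if m = 1 then 1 else 2 + (1 + Nat.log 2 m) / 2 + Nat.log 2 m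

open ENNReal

lemma aux_log (k j : ℕ) (hj : j < 2 ^ k) : Nat.log 2 (2 ^ k + j) = k :=
  Nat.log_eq_of_pow_le_of_lt_pow (Nat.le_add_right _ _) (by rw [pow_succ]; omega)

lemma aux_inner (k : ℕ) :
    ∑' j : Fin (2 ^ k), ((2 : ℝ≥0∞) ^ iotaLen (2 ^ k + (j : ℕ)))⁻¹
      = if k = 0 then 2⁻¹ else (2 ^ (2 + (1 + k) / 2))⁻¹ := by
  have hval : ∀ j : Fin (2 ^ k), ((2 : ℝ≥0∞) ^ iotaLen (2 ^ k + (j : ℕ)))⁻¹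
      = if k = 0 then 2⁻¹ else (2 ^ (2 + (1 + k) / 2 + k))⁻¹ := by
    intro j
    rcases Nat.eq_zero_or_pos k with hk | hk
    · subst hk
      have : (j : ℕ) = 0 := by omega
      simp [iotaLen, this]
    · have h1 : 2 ^ k + (j : ℕ) ≠ 1 := by
        have := Nat.one_lt_two_pow_iff.mpr (by omega : k ≠ 0); omega
      simp [iotaLen, h1, aux_log k j j.isLt, hk.ne']
  rw [tsum_fintype]
  simp only [hval]
  rcases Nat.eq_zero_or_pos k with hk | hk
  · subst hk; simp
  · rw [Finset.sum_const, Finset.card_univ, Fintype.card_fin, if_neg hk.ne', if_neg hk.ne',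
      nsmul_eq_mul, Nat.cast_pow, Nat.cast_ofNat, pow_add 2 (2 + (1 + k) / 2) k,
      mul_comm ((2:ℝ≥0∞) ^ (2 + (1 + k) / 2)) (2 ^ k),
      ENNReal.mul_inv (Or.inl (by simp)) (Or.inl (by simp)), ← mul_assoc,
      ENNReal.mul_inv_cancel (by simp) (by exact ENNReal.pow_ne_top (by simp)), one_mul]


/-- L_ι satisfies Kraft's inequality: ∑_{m=1}^∞ 2^{-L_ι(m)} ≤ 1. -/
theorem iotaLen_kraft :
    ∑' m : ℕ, ((2 : ENNReal) ^ iotaLen (m + 1))⁻¹ ≤ 1 := by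
  have hmem : ∀ m : ℕ, m + 1 - 2 ^ Nat.log 2 (m + 1) < 2 ^ Nat.log 2 (m + 1) := by
    intro m
    have h2 : 2 ^ Nat.log 2 (m + 1) ≤ m + 1 := Nat.pow_log_le_self 2 (by omega)
    have h3 := Nat.lt_pow_succ_log_self (b := 2) one_lt_two (m + 1)
    rw [pow_succ] at h3; omega
  set i : ℕ → Σ k : ℕ, Fin (2 ^ k) := fun m =>
    ⟨Nat.log 2 (m + 1), ⟨m + 1 - 2 ^ Nat.log 2 (m + 1), hmem m⟩⟩ with hi
  have hinj : Function.Injective i := by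
    intro a b hab
    simp only [hi] at hab
    obtain ⟨h1, h2⟩ := Sigma.mk.inj_iff.mp hab
    rw [Fin.heq_ext_iff (by rw [h1])] at h2
    simp only at h1 h2
    have ha : 2 ^ Nat.log 2 (a + 1) ≤ a + 1 := Nat.pow_log_le_self 2 (by omega)
    have hb : 2 ^ Nat.log 2 (b + 1) ≤ b + 1 := Nat.pow_log_le_self 2 (by omega)
    have : (2:ℕ) ^ Nat.log 2 (a+1) = 2 ^ Nat.log 2 (b+1) := by rw [h1]
    omega
  have h2inv : (2:ℝ≥0∞) * 2⁻¹ = 1 := ENNReal.mul_inv_cancel (by norm_num) (by norm_num)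
  calc ∑' m : ℕ, ((2 : ℝ≥0∞) ^ iotaLen (m + 1))⁻¹
      ≤ ∑' p : Σ k : ℕ, Fin (2 ^ k), ((2 : ℝ≥0∞) ^ iotaLen (2 ^ p.1 + (p.2 : ℕ)))⁻¹ := by
        refine le_trans (le_of_eq (tsum_congr fun m => ?_))
          (tsum_comp_le_tsum_of_injective hinj
            (fun p => ((2 : ℝ≥0∞) ^ iotaLen (2 ^ p.1 + (p.2 : ℕ)))⁻¹))
        have h2 : 2 ^ Nat.log 2 (m + 1) ≤ m + 1 := Nat.pow_log_le_self 2 (by omega)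
        have harg : 2 ^ Nat.log 2 (m+1) + (m + 1 - 2 ^ Nat.log 2 (m+1)) = m + 1 := by omega
        simp only [hi]
        rw [harg]
    _ = ∑' k : ℕ, ∑' j : Fin (2 ^ k), ((2 : ℝ≥0∞) ^ iotaLen (2 ^ k + (j : ℕ)))⁻¹ :=
        ENNReal.tsum_sigma' _
    _ = ∑' k : ℕ, if k = 0 then 2⁻¹ else ((2:ℝ≥0∞) ^ (2 + (1 + k) / 2))⁻¹ :=
        tsum_congr aux_inner
    _ = 2⁻¹ + ∑' k : ℕ, ((2:ℝ≥0∞) ^ (2 + (1 + (k+1)) / 2))⁻¹ := by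
        rw [tsum_eq_zero_add' ENNReal.summable]; simp
    _ = 2⁻¹ + ∑' k : ℕ, ((2:ℝ≥0∞) ^ (3 + k / 2))⁻¹ := by
        refine congrArg _ (tsum_congr fun k => ?_)
        have he : 2 + (1 + (k + 1)) / 2 = 3 + k / 2 := by omega
        rw [he]
    _ = 2⁻¹ + ∑' p : ℕ × Fin 2, ((2:ℝ≥0∞) ^ (3 + p.1))⁻¹ := by
        refine congrArg _ ?_
        rw [← Equiv.tsum_eq (Nat.divModEquiv 2).symm (fun n => ((2:ℝ≥0∞) ^ (3 + n / 2))⁻¹)]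
        refine tsum_congr fun p => ?_
        have hlt := p.2.isLt
        have : ((Nat.divModEquiv 2).symm p) / 2 = p.1 := by
          simp only [Nat.divModEquiv_symm_apply]
          omega
        rw [this]
    _ = 2⁻¹ + ∑' q : ℕ, (2 * ((2:ℝ≥0∞) ^ (3 + q))⁻¹) := by
        rw [ENNReal.tsum_prod (f := fun (a : ℕ) (_ : Fin 2) => ((2:ℝ≥0∞) ^ (3 + a))⁻¹)]
        refine congrArg _ (tsum_congr fun q => ?_)
        rw [tsum_fintype]
        simp [two_mul]
    _ = 1 := by
        have key : ∀ q : ℕ, (2 * ((2:ℝ≥0∞) ^ (3 + q))⁻¹) = (2 * (2⁻¹)^3) * (2⁻¹) ^ q := by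
          intro q
          rw [pow_add, ENNReal.mul_inv (by simp) (by simp), ENNReal.inv_pow, ENNReal.inv_pow]
          ring
        simp only [key]
        rw [ENNReal.tsum_mul_left, ENNReal.tsum_geometric, ENNReal.one_sub_inv_two, inv_inv]
        have : (2:ℝ≥0∞) * 2⁻¹ ^ 3 * 2 = 2⁻¹ := by
          have : (2:ℝ≥0∞) * 2⁻¹ ^ 3 * 2 = (2 * 2⁻¹) * (2 * 2⁻¹) * 2⁻¹ := by ring
          rw [this, h2inv, one_mul, one_mul]
        rw [this, ENNReal.inv_two_add_inv_two]
end

section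
/- Let L_κ be the length function of the κ code. For every non-increasing probability distribution P on ℕ⁺ with finite entropy, E_P(L_κ) ≤ 5 + H(P) + 2·log₂(1 + H(P)). Consequently, the κ code is asymptotically optimal: E_P(L_κ)/max{1,H(P)} ≤ R(H(P)) where R(h) = (5 + h + 2 log₂(1+h))/max{1,h} tends to 1 as h → ∞. -/
/-- The codeword length function of the κ code. -/
def kappaLen (m : ℕ) : ℕ :=
  if m = 1 then 1
  else if m ≤ 3 then 4
  else if m ≤ 7 then 5
  else 2 + Nat.log 2 m + 2 * Nat.log 2 (Nat.log 2 m - 1)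

/-!
Bound the codeword length pointwise by a concave function of `log₂ m`:
`L_κ(m) ≤ g(log₂ m)` with `g(x) = 5 + x + 2 log₂(1 + x)`. For a non-increasing distribution
`m P(m) ≤ P(1) + ⋯ + P(m) ≤ 1`, so `log₂ m ≤ -log₂ P(m)` and `E_P(log₂ m) ≤ H(P)`.
Since `g` is concave and non-decreasing, its tangent line at `H(P)` gives Jensen's inequality
`E_P(g(log₂ m)) ≤ g(H(P))`.
-/

open Real Filter Topology Finset

lemma logb_le_logb_add_tangent {b x y : ℝ} (hb : 1 < b) (hx : 0 < x) (hy : 0 < y) :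
    logb b x ≤ logb b y + (x - y) / (y * log b) := by
  have hlog : log x - log y ≤ (x - y) / y := by
    have := log_le_sub_one_of_pos (div_pos hx hy)
    rwa [log_div hx.ne' hy.ne', div_sub_one hy.ne'] at this
  have hlogb : logb b x - logb b y ≤ (x - y) / (y * log b) := by
    rw [logb, logb, ← sub_div, ← div_div]
    exact div_le_div_of_nonneg_right hlog (log_pos hb).le
  linarith

lemma Antitone.succ_mul_le_of_hasSum {Q : ℕ → ℝ} {s : ℝ} (hQ : Antitone Q)
    (h0 : ∀ n, 0 ≤ Q n) (hs : HasSum Q s) (n : ℕ) : (n + 1 : ℝ) * Q n ≤ s :=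
  calc (n + 1 : ℝ) * Q n = ∑ _k ∈ range (n + 1), Q n := by simp
    _ ≤ ∑ k ∈ range (n + 1), Q k :=
      sum_le_sum fun _k hk => hQ (Nat.le_of_lt_succ (mem_range.mp hk))
    _ ≤ s := sum_le_hasSum _ (fun k _ => h0 k) hs

lemma mul_logb_le_neg_mul_logb {b p m : ℝ} (hb : 1 < b) (hp : 0 ≤ p) (hm : 0 < m)
    (hmp : m * p ≤ 1) : p * logb b m ≤ -(p * logb b p) := by
  rcases hp.eq_or_lt with rfl | hp
  · simp
  have : p * logb b (m * p) ≤ 0 :=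
    mul_nonpos_of_nonneg_of_nonpos hp.le (logb_nonpos hb (by positivity) hmp)
  rw [logb_mul hm.ne' hp.ne'] at this
  linarith

lemma Antitone.tsum_mul_logb_succ_le_entropy {Q : ℕ → ℝ} (hQ : Antitone Q) (h0 : ∀ n, 0 ≤ Q n)
    (hs : HasSum Q 1) (hent : Summable fun n => Q n * logb 2 (Q n)) :
    Summable (fun n : ℕ => Q n * logb 2 (n + 1)) ∧
      ∑' n : ℕ, Q n * logb 2 (n + 1) ≤ -∑' n, Q n * logb 2 (Q n) := by
  have hle : ∀ n : ℕ, Q n * logb 2 (n + 1) ≤ -(Q n * logb 2 (Q n)) := fun n =>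
    mul_logb_le_neg_mul_logb one_lt_two (h0 n) (by positivity) (hQ.succ_mul_le_of_hasSum h0 hs n)
  have hsumm : Summable (fun n : ℕ => Q n * logb 2 (n + 1)) :=
    hent.neg.of_nonneg_of_le
      (fun n => mul_nonneg (h0 n) (logb_nonneg one_lt_two (by simp))) hle
  exact ⟨hsumm, (hsumm.tsum_le_tsum hle hent.neg).trans_eq tsum_neg⟩

/-- Jensen's inequality through a supporting line of slope `s ≥ 0`. -/
lemma tsum_mul_le_of_le_affine {p K x : ℕ → ℝ} {c s H : ℝ} (hp : ∀ n, 0 ≤ p n)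
    (hsum : HasSum p 1) (hK : Summable fun n => K n * p n) (hx : Summable fun n => p n * x n)
    (hxH : ∑' n, p n * x n ≤ H) (hs : 0 ≤ s) (hbound : ∀ n, K n ≤ c + s * (x n - H)) :
    ∑' n, K n * p n ≤ c := by
  have hpoint : ∀ n, K n * p n ≤ (c - s * H) * p n + s * (p n * x n) := fun n =>
    (mul_le_mul_of_nonneg_right (hbound n) (hp n)).trans_eq (by ring)
  have hsum' := (hsum.mul_left (c - s * H)).add (hx.hasSum.mul_left s)
  calc ∑' n, K n * p n ≤ (c - s * H) * 1 + s * ∑' n, p n * x n :=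
        (hK.tsum_le_tsum hpoint hsum'.summable).trans_eq hsum'.tsum_eq
    _ ≤ c := by linarith [mul_le_mul_of_nonneg_left hxH hs]

noncomputable def kappaBound (x : ℝ) : ℝ := 5 + x + 2 * logb 2 (1 + x)

lemma kappaLen_le_kappaBound {m : ℕ} (hm : 1 ≤ m) :
    (kappaLen m : ℝ) ≤ kappaBound (logb 2 m) := by
  have hL : 0 ≤ logb 2 m := logb_nonneg one_lt_two (by exact_mod_cast hm)
  have hlogL : 0 ≤ logb 2 (1 + logb 2 m) := logb_nonneg one_lt_two (by linarith)
  unfold kappaLen kappaBound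
  split_ifs with h1 h3 h7
  · push_cast; linarith
  · push_cast; linarith
  · push_cast; linarith
  · set k := Nat.log 2 m
    have hk : (3 : ℝ) ≤ k := by
      exact_mod_cast (Nat.le_log_iff_pow_le one_lt_two (by omega)).mpr (by omega)
    have hkL : (k : ℝ) ≤ logb 2 m := natLog_le_logb m 2
    have hk1 : ((k - 1 : ℕ) : ℝ) = k - 1 := by
      rw [Nat.cast_sub (by exact_mod_cast (by linarith : (1 : ℝ) ≤ k)), Nat.cast_one]
    have hlogk : (Nat.log 2 (k - 1) : ℝ) ≤ logb 2 (1 + logb 2 m) :=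
      (natLog_le_logb _ 2).trans <|
        logb_le_logb_of_le one_lt_two (by rw [hk1]; linarith) (by rw [hk1]; linarith)
    push_cast
    linarith

lemma kappaBound_le_tangent {x h : ℝ} (hx : -1 < x) (hh : -1 < h) :
    kappaBound x ≤ kappaBound h + (1 + 2 / ((1 + h) * log 2)) * (x - h) := by
  have := logb_le_logb_add_tangent one_lt_two (by linarith : 0 < 1 + x) (by linarith : 0 < 1 + h)
  rw [add_sub_add_left_eq_sub] at this
  unfold kappaBound
  linarith [show 2 / ((1 + h) * log 2) * (x - h) = 2 * ((x - h) / ((1 + h) * log 2)) by ring]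

lemma tendsto_kappaBound_div_max :
    Tendsto (fun h => kappaBound h / max 1 h) atTop (𝓝 1) := by
  have hlog : Tendsto (fun h : ℝ => log (1 + h) / h) atTop (𝓝 0) := by
    refine ((tendsto_pow_log_div_mul_add_atTop 1 (-1) 1 one_ne_zero).comp
      (tendsto_atTop_add_const_left atTop 1 tendsto_id)).congr fun h => ?_
    simp
  have hlim : Tendsto (fun h : ℝ => 5 / h + 1 + 2 / log 2 * (log (1 + h) / h)) atTop (𝓝 1) := by
    simpa using ((tendsto_const_nhds.div_atTop tendsto_id).add tendsto_const_nhds).add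
      (hlog.const_mul (2 / log 2))
  refine hlim.congr' ?_
  filter_upwards [eventually_ge_atTop 1] with h hh
  rw [max_eq_right hh, kappaBound, logb]
  field_simp

/-- For every non-increasing probability distribution P with finite entropy,
E_P(L_κ) ≤ 5 + H(P) + 2 log₂(1 + H(P)); consequently the κ code is
asymptotically optimal with R(h) = (5 + h + 2 log₂(1+h)) / max{1,h} → 1. -/
theorem kappa_asymptotically_optimal
    (P : ℕ → ℝ)
    (hnonneg : ∀ n, 1 ≤ n → 0 ≤ P n)
    (hmono : ∀ m, 1 ≤ m → P (m + 1) ≤ P m)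
    (hsum : HasSum (fun n : ℕ => P (n + 1)) 1)
    (hent : Summable (fun n : ℕ => P (n + 1) * Real.logb 2 (P (n + 1))))
    (hexp : Summable (fun n : ℕ => (kappaLen (n + 1) : ℝ) * P (n + 1))) :
    (∑' n : ℕ, (kappaLen (n + 1) : ℝ) * P (n + 1)
        ≤ 5 + (-∑' n : ℕ, P (n + 1) * Real.logb 2 (P (n + 1)))
          + 2 * Real.logb 2 (1 + (-∑' n : ℕ, P (n + 1) * Real.logb 2 (P (n + 1))))) ∧
    ((∑' n : ℕ, (kappaLen (n + 1) : ℝ) * P (n + 1))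
        / max 1 (-∑' n : ℕ, P (n + 1) * Real.logb 2 (P (n + 1)))
        ≤ (5 + (-∑' n : ℕ, P (n + 1) * Real.logb 2 (P (n + 1)))
            + 2 * Real.logb 2 (1 + (-∑' n : ℕ, P (n + 1) * Real.logb 2 (P (n + 1)))))
          / max 1 (-∑' n : ℕ, P (n + 1) * Real.logb 2 (P (n + 1)))) ∧
    Filter.Tendsto
      (fun h : ℝ => (5 + h + 2 * Real.logb 2 (1 + h)) / max 1 h)
      Filter.atTop (nhds 1) := by
  have h0 : ∀ n : ℕ, 0 ≤ P (n + 1) := fun n => hnonneg _ n.succ_pos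
  have hanti : Antitone fun n => P (n + 1) :=
    antitone_nat_of_succ_le fun n => hmono _ n.succ_pos
  obtain ⟨hlogsum, hlogH⟩ := hanti.tsum_mul_logb_succ_le_entropy h0 hsum hent
  set H := -∑' n : ℕ, P (n + 1) * logb 2 (P (n + 1))
  have hlog0 : ∀ n : ℕ, 0 ≤ logb 2 (n + 1 : ℝ) := fun n => logb_nonneg one_lt_two (by simp)
  have hH : 0 ≤ H := (tsum_nonneg fun n => mul_nonneg (h0 n) (hlog0 n)).trans hlogH
  have hmain : ∑' n : ℕ, (kappaLen (n + 1) : ℝ) * P (n + 1) ≤ kappaBound H := by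
    refine tsum_mul_le_of_le_affine (s := 1 + 2 / ((1 + H) * log 2)) h0 hsum hexp hlogsum hlogH
      (by positivity) fun n => ?_
    have := kappaLen_le_kappaBound n.succ_pos
    push_cast at this
    exact this.trans (kappaBound_le_tangent (by linarith [hlog0 n]) (by linarith))
  exact ⟨hmain, div_le_div_of_nonneg_right hmain (by positivity), tendsto_kappaBound_div_max⟩
end

section
/- Fix a positive integer t. Define L(1) = 1, L(m) = 2 + ⌊log₂ m⌋ + ⌊(1 + ⌊log₂ m⌋)/2⌋ for 2 ≤ m < 2^{2t-1}, and L(m) = t + ⌊log₂ m⌋ + 2⌊log₂(⌊log₂ m⌋ + 3 - 2t)⌋ for m ≥ 2^{2t-1}. Then L(m) ≤ 5/2 + 1/(2t+2) + (3/2 + 1/(2t+2))·⌊log₂ m⌋ for all m ≥ 2. -/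
/-- The codeword length function of the κ[t] code. -/
def kappaTLen (t m : ℕ) : ℕ :=
  if m = 1 then 1
  else if m < 2 ^ (2 * t - 1) then 2 + Nat.log 2 m + (1 + Nat.log 2 m) / 2
  else t + Nat.log 2 m + 2 * Nat.log 2 (Nat.log 2 m + 3 - 2 * t)

lemma kappaT_pow_aux : ∀ j : ℕ, 2 ≤ j → 4 * j ≤ 4 + 2 ^ j := by
  intro j hj
  induction j with
  | zero => omega
  | succ n ih =>
    rcases Nat.lt_or_ge n 2 with h | h
    · interval_cases n <;> norm_num
    · have h1 := ih h
      have h2 : (4 : ℕ) ≤ 2 ^ n := by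
        calc (4 : ℕ) = 2 ^ 2 := by norm_num
        _ ≤ 2 ^ n := Nat.pow_le_pow_right (by norm_num) h
      rw [pow_succ]
      omega

lemma kappaT_log_bound (s : ℕ) (hs : 4 ≤ s) : 4 * Nat.log 2 s ≤ 4 + s := by
  have hp : 2 ^ Nat.log 2 s ≤ s := Nat.pow_log_le_self 2 (by omega)
  have hj : 2 ≤ Nat.log 2 s := by
    have := (Nat.le_log_iff_pow_le (b := 2) (by norm_num) (y := s) (x := 2) (by omega)).mpr
      (by norm_num; omega)
    exact this
  have := kappaT_pow_aux (Nat.log 2 s) hj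
  omega

lemma kappaT_key (t m : ℕ) (ht : 1 ≤ t) (hm : 2 ≤ m) :
    2 * (t + 1) * kappaTLen t m ≤ 5 * t + 6 + (3 * t + 4) * Nat.log 2 m := by
  have hk1 : 0 < Nat.log 2 m := Nat.log_pos (by norm_num) hm
  unfold kappaTLen
  rw [if_neg (by omega)]
  set k := Nat.log 2 m with hkdef
  split_ifs with h
  · have hq : (1 + k) / 2 * 2 ≤ 1 + k := Nat.div_mul_le_self _ _
    nlinarith [Nat.mul_le_mul_left (t + 1) hq]
  · have hpm : 2 ^ (2 * t - 1) ≤ m := le_of_not_gt h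
    have hk : 2 * t - 1 ≤ k := by
      exact (Nat.le_log_iff_pow_le (b := 2) (by norm_num) (y := m) (x := 2 * t - 1)
        (by omega)).mpr hpm
    set s := k + 3 - 2 * t with hsdef
    have hks : k + 3 = s + 2 * t := by omega
    have hs2 : 2 ≤ s := by omega
    rcases Nat.lt_or_ge s 4 with h4 | h4
    · have hlog : Nat.log 2 s = 1 := by
        apply Nat.log_eq_of_pow_le_of_lt_pow <;> simp <;> omega
      rw [hlog]
      have hk2 : 2 * t ≤ k + 1 := by omega
      nlinarith [Nat.mul_le_mul_left t hk2, hk2]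
    · have hl := kappaT_log_bound s h4
      have h1 : t * (k + 3) = t * (s + 2 * t) := by rw [hks]
      nlinarith [Nat.mul_le_mul_left (t + 1) hl, h1, hks, h4]

/-- L_{κ[t]}(m) ≤ 5/2 + 1/(2t+2) + (3/2 + 1/(2t+2))⌊log₂ m⌋ for all m ≥ 2. -/
theorem kappaTLen_le (t : ℕ) (ht : 1 ≤ t) (m : ℕ) (hm : 2 ≤ m) :
    (kappaTLen t m : ℝ)
      ≤ 5 / 2 + 1 / (2 * (t : ℝ) + 2)
        + (3 / 2 + 1 / (2 * (t : ℝ) + 2)) * (Nat.log 2 m : ℝ) := by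
  have key := kappaT_key t m ht hm
  have hD : (0 : ℝ) < 2 * (t : ℝ) + 2 := by positivity
  have hEq : 5 / 2 + 1 / (2 * (t : ℝ) + 2)
        + (3 / 2 + 1 / (2 * (t : ℝ) + 2)) * (Nat.log 2 m : ℝ)
      = (5 * (t : ℝ) + 6 + (3 * (t : ℝ) + 4) * (Nat.log 2 m : ℝ)) / (2 * (t : ℝ) + 2) := by
    field_simp
    ring
  rw [hEq, le_div_iff₀ hD]
  calc (kappaTLen t m : ℝ) * (2 * (t : ℝ) + 2)
      = ((2 * (t + 1) * kappaTLen t m : ℕ) : ℝ) := by push_cast; ring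
    _ ≤ ((5 * t + 6 + (3 * t + 4) * Nat.log 2 m : ℕ) : ℝ) := by exact_mod_cast key
    _ = 5 * (t : ℝ) + 6 + (3 * (t : ℝ) + 4) * (Nat.log 2 m : ℝ) := by push_cast; ring
end

section
/- Define the sequence a₁ = 2, a_{k+1} = 2^{a_k}, and let λ(m) = ⌊log₂ m⌋. For every integer t ≥ 4 and every integer m ≥ a_t, the t-fold composition satisfies λᵗ(m) + 1 ≤ ⌊log₂ m⌋ / 2^{t-1}. -/
/-- The tower sequence: a 1 = 2 and a (k+1) = 2 ^ a k (a 0 is a junk value). -/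
def tower : ℕ → ℕ
  | 0 => 1
  | 1 => 2
  | (k + 2) => 2 ^ tower (k + 1)

lemma two_mul_le_pow (k : ℕ) (hk : 1 ≤ k) : 2 * k ≤ 2 ^ k := by
  induction k with
  | zero => omega
  | succ n ih =>
    rcases Nat.eq_or_lt_of_le hk with h | h
    · simp [← h]
    · have h1 : 1 ≤ n := by omega
      have := ih h1
      have h2 : 2 ≤ 2 ^ n := Nat.one_lt_two_pow_iff.mpr (by omega)
      calc 2 * (n + 1) = 2 * n + 2 := by ring
        _ ≤ 2 ^ n + 2 ^ n := by omega
        _ = 2 ^ (n + 1) := by ring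

lemma eight_mul_le_pow : ∀ k, 7 ≤ k → 8 * (k + 1) ≤ 2 ^ k := by
  intro k hk
  induction k with
  | zero => omega
  | succ n ih =>
    rcases Nat.eq_or_lt_of_le hk with h | h
    · simp [← h]
    · have h1 : 7 ≤ n := by omega
      have := ih h1
      have h2 : 8 ≤ 2 ^ n := by
        calc (8 : ℕ) = 2 ^ 3 := rfl
          _ ≤ 2 ^ n := Nat.pow_le_pow_right (by norm_num) (by omega)
      calc 8 * (n + 1 + 1) = 8 * (n + 1) + 8 := by ring
        _ ≤ 2 ^ n + 2 ^ n := by omega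
        _ = 2 ^ (n + 1) := by ring

lemma two_log_le (n : ℕ) (h : 2 ≤ n) : 2 * Nat.log 2 n ≤ n := by
  have hk : 1 ≤ Nat.log 2 n := Nat.log_pos (by norm_num) h
  calc 2 * Nat.log 2 n ≤ 2 ^ Nat.log 2 n := two_mul_le_pow _ hk
    _ ≤ n := Nat.pow_log_le_self 2 (by omega)

lemma base3 (n : ℕ) (h : 16 ≤ n) : 8 * ((Nat.log 2)^[3] n + 1) ≤ n := by
  show 8 * (Nat.log 2 (Nat.log 2 (Nat.log 2 n)) + 1) ≤ n
  by_cases hbig : n < 2 ^ 16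
  · have h0 : 4 ≤ Nat.log 2 n :=
      (Nat.le_log_iff_pow_le (by norm_num) (by omega)).mpr (by omega)
    have h1 : Nat.log 2 n < 16 := Nat.log_lt_of_lt_pow (by omega) hbig
    have h0' : 2 ≤ Nat.log 2 (Nat.log 2 n) :=
      (Nat.le_log_iff_pow_le (by norm_num) (by omega)).mpr (by omega)
    have h2 : Nat.log 2 (Nat.log 2 n) < 4 :=
      Nat.log_lt_of_lt_pow (by omega) (by omega)
    have h4 : Nat.log 2 (Nat.log 2 (Nat.log 2 n)) < 2 :=
      Nat.log_lt_of_lt_pow (by omega) (by omega)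
    omega
  · push_neg at hbig
    set k := Nat.log 2 n with hk
    have hk16 : 16 ≤ k := by
      rw [hk]
      exact (Nat.le_log_iff_pow_le (by norm_num) (by omega)).mpr hbig
    have hll : Nat.log 2 (Nat.log 2 k) ≤ k :=
      le_trans (Nat.log_mono_right (Nat.log_le_self 2 k)) (Nat.log_le_self 2 k)
    calc 8 * (Nat.log 2 (Nat.log 2 k) + 1) ≤ 8 * (k + 1) := by omega
      _ ≤ 2 ^ k := eight_mul_le_pow k (by omega)
      _ ≤ n := Nat.pow_log_le_self 2 (by omega)

lemma tower_ge (s : ℕ) (hs : 3 ≤ s) : 16 ≤ tower s := by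
  induction s, hs using Nat.le_induction with
  | base => decide
  | succ n hn ih =>
    obtain ⟨m, rfl⟩ : ∃ m, n = m + 1 := ⟨n - 1, by omega⟩
    show 16 ≤ 2 ^ tower (m + 1)
    calc 16 ≤ tower (m + 1) := ih
      _ ≤ 2 ^ tower (m + 1) := Nat.le_of_lt (Nat.lt_two_pow_self)

lemma key : ∀ s, 3 ≤ s → ∀ n, tower s ≤ n → 2 ^ s * ((Nat.log 2)^[s] n + 1) ≤ n := by
  intro s hs
  induction s, hs using Nat.le_induction with
  | base =>
    intro n hn
    have : tower 3 = 16 := by decide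
    show 8 * ((Nat.log 2)^[3] n + 1) ≤ n
    exact base3 n (by omega)
  | succ s hs ih =>
    intro n hn
    have hts : tower (s + 1) = 2 ^ tower s := by
      obtain ⟨m, rfl⟩ : ∃ m, s = m + 1 := ⟨s - 1, by omega⟩
      rfl
    have h16 : 16 ≤ tower s := tower_ge s hs
    have hn2 : 2 ^ 16 ≤ n := by
      rw [hts] at hn
      calc (2:ℕ) ^ 16 ≤ 2 ^ tower s := Nat.pow_le_pow_right (by norm_num) h16
        _ ≤ n := hn
    have hlog : tower s ≤ Nat.log 2 n := by
      apply (Nat.le_log_iff_pow_le (by norm_num) (by omega)).mpr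
      rw [← hts]; exact hn
    have hih := ih (Nat.log 2 n) hlog
    rw [Function.iterate_succ_apply]
    have h2l : 2 * Nat.log 2 n ≤ n := two_log_le n (by omega)
    calc 2 ^ (s + 1) * ((Nat.log 2)^[s] (Nat.log 2 n) + 1)
        = 2 * (2 ^ s * ((Nat.log 2)^[s] (Nat.log 2 n) + 1)) := by ring
      _ ≤ 2 * Nat.log 2 n := by omega
      _ ≤ n := h2l

/-- For every integer t ≥ 4 and m ≥ a_t, the t-fold composition of
λ(m) = ⌊log₂ m⌋ satisfies λᵗ(m) + 1 ≤ ⌊log₂ m⌋ / 2^(t-1). -/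
theorem iterated_log_le (t : ℕ) (ht : 4 ≤ t) (m : ℕ) (hm : tower t ≤ m) :
    ((Nat.log 2)^[t] m : ℝ) + 1 ≤ (Nat.log 2 m : ℝ) / 2 ^ (t - 1) := by
  obtain ⟨s, rfl⟩ : ∃ s, t = s + 1 := ⟨t - 1, by omega⟩
  have hs : 3 ≤ s := by omega
  have hts : tower (s + 1) = 2 ^ tower s := by
    obtain ⟨m', rfl⟩ : ∃ m', s = m' + 1 := ⟨s - 1, by omega⟩
    rfl
  have h16 : 16 ≤ tower s := tower_ge s hs
  have hm1 : 1 ≤ m := by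
    rw [hts] at hm
    have : (1:ℕ) ≤ 2 ^ tower s := Nat.one_le_two_pow
    omega
  have hlog : tower s ≤ Nat.log 2 m := by
    apply (Nat.le_log_iff_pow_le (by norm_num) (by omega)).mpr
    rw [← hts]; exact hm
  have hkey := key s hs (Nat.log 2 m) hlog
  rw [Function.iterate_succ_apply]
  have hnat : 2 ^ s * ((Nat.log 2)^[s] (Nat.log 2 m) + 1) ≤ Nat.log 2 m := hkey
  have hpos : (0:ℝ) < 2 ^ s := by positivity
  simp only [Nat.add_sub_cancel]
  rw [le_div_iff₀ hpos]
  have : ((2:ℝ) ^ s * ((Nat.log 2)^[s] (Nat.log 2 m) + 1) : ℝ) ≤ (Nat.log 2 m : ℝ) := by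
    exact_mod_cast hnat
  linarith [this]
end
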